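/- Let Z be a full subcomplex of a finite 5-large simplicial complex X_0, let X be a finite 5-large simplicial complex obtained by the basic construction starting from X_0, and let (W,S) be the right-angled Coxeter system with nerve X. Then the right-angled Coxeter group W' with nerve Z embeds as a subgroup of W. -/

import Mathlib

/-! Core definitions for formalizing results of D. Osajda,
"A construction of hyperbolic Coxeter groups". -/

open scoped Classical

noncomputable section

namespace Osajda

/-! ### Abstract simplicial complexes -/

/-- An abstract simplicial complex on a vertex type `V`. -/
structure SComplex (V : Type*) where
  faces : Set (Finset V)
  nonempty_of_mem : ∀ {s : Finset V}, s ∈ faces → s.Nonempty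
  down_closed : ∀ {s t : Finset V}, s ∈ faces → t ⊆ s → t.Nonempty → t ∈ faces

variable {V : Type*}

namespace SComplex

/-- The vertex set of a simplicial complex. -/
def vertexSet (X : SComplex V) : Set V := {v | ({v} : Finset V) ∈ X.faces}

/-- Two vertices are adjacent if they are distinct and joined by an edge. -/
def Adj (X : SComplex V) (v w : V) : Prop := v ≠ w ∧ ({v, w} : Finset V) ∈ X.faces

lemma Adj.symm {X : SComplex V} {v w : V} (h : X.Adj v w) : X.Adj w v := by
  refine ⟨h.1.symm, ?_⟩
  rw [Finset.pair_comm]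
  exact h.2

/-- A complex is finite if it has finitely many faces. -/
def IsFinite (X : SComplex V) : Prop := X.faces.Finite

/-- A complex is flag if every finite set of vertices that are pairwise joined by
edges spans a simplex. -/
def Flag (X : SComplex V) : Prop :=
  ∀ s : Finset V, s.Nonempty → (∀ v ∈ s, ∀ w ∈ s, v = w ∨ X.Adj v w) → s ∈ X.faces

/-- The full subcomplex spanned by a set `A` of vertices. -/
def fullSub (X : SComplex V) (A : Set V) : SComplex V where
  faces := {s | s ∈ X.faces ∧ (s : Set V) ⊆ A}
  nonempty_of_mem h := X.nonempty_of_mem h.1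
  down_closed h hsub hne :=
    ⟨X.down_closed h.1 hsub hne, subset_trans (Finset.coe_subset.2 hsub) h.2⟩

/-- `Z` is a full subcomplex of `X`. -/
def IsFullSubcomplexOf (Z X : SComplex V) : Prop :=
  Z.faces ⊆ X.faces ∧ ∀ s ∈ X.faces, (s : Set V) ⊆ Z.vertexSet → s ∈ Z.faces

/-- `X` contains a `j`-cycle as a full subcomplex. -/
def HasFullCycle (X : SComplex V) (j : ℕ) : Prop :=
  ∃ f : ZMod j → V, Function.Injective f ∧ (∀ i, X.Adj (f i) (f (i + 1))) ∧
    (∀ i k : ZMod j, X.Adj (f i) (f k) → k = i + 1 ∨ k = i - 1)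

/-- A flag simplicial complex is `k`-large if it has no full `j`-cycles, `4 ≤ j < k`. -/
def Large (X : SComplex V) (k : ℕ) : Prop :=
  X.Flag ∧ ∀ j : ℕ, 4 ≤ j → j < k → ¬ X.HasFullCycle j

/-- The link of a simplex `σ`. -/
def link (X : SComplex V) (σ : Finset V) : SComplex V where
  faces := {τ | τ ∈ X.faces ∧ Disjoint τ σ ∧ τ ∪ σ ∈ X.faces}
  nonempty_of_mem h := X.nonempty_of_mem h.1
  down_closed {s t} h hsub hne := by
    refine ⟨X.down_closed h.1 hsub hne, Disjoint.mono_left hsub h.2.1, ?_⟩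
    exact X.down_closed h.2.2 (Finset.union_subset_union hsub le_rfl)
      (Finset.Nonempty.mono Finset.subset_union_left hne)

/-- A complex is locally `k`-large if the links of all its simplices are `k`-large. -/
def LocallyLarge (X : SComplex V) (k : ℕ) : Prop :=
  ∀ σ ∈ X.faces, (X.link σ).Large k

/-- `X.Reach n v w` : `v` and `w` are at distance at most `n` in the 1-skeleton. -/
def Reach (X : SComplex V) (n : ℕ) (v w : V) : Prop :=
  ∃ p : Fin (n + 1) → V, p 0 = v ∧ p (Fin.last n) = w ∧
    ∀ i : Fin n, p i.castSucc = p i.succ ∨ X.Adj (p i.castSucc) (p i.succ)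

/-- A `k`-wheel `(v₀; f 0, …, f (k-1))` in `X`, as a full subcomplex. -/
def IsWheel (X : SComplex V) (k : ℕ) (v₀ : V) (f : ZMod k → V) : Prop :=
  Function.Injective f ∧ (∀ i, v₀ ≠ f i) ∧ (∀ i, X.Adj (f i) (f (i + 1))) ∧
    (∀ i, X.Adj v₀ (f i)) ∧ (∀ i k', X.Adj (f i) (f k') → k' = i + 1 ∨ k' = i - 1)

/-- The property `SD₂*(k)`. -/
def SD2star (X : SComplex V) (k : ℕ) : Prop :=
  (¬ ∃ (v₀ : V) (f : ZMod 4 → V), X.IsWheel 4 v₀ f) ∧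
  ∀ l : ℕ, 5 ≤ l → l < k → ∀ (v₀ : V) (f : ZMod l → V) (t : V),
    X.IsWheel l v₀ f → ({f 1, f 2, t} : Finset V) ∈ X.faces →
    (∀ i, t ≠ f i) → t ≠ v₀ →
    ∃ v : V, X.Reach 1 v v₀ ∧ (∀ i, X.Reach 1 v (f i)) ∧ X.Reach 1 v t

/-- A flag simplicial complex is weakly systolic if for every vertex `v`, every
`i ≥ 1` and every simplex `σ ⊆ S_{i+1}(v)`, the intersection `X_σ ∩ B_i(v)` is a
nonempty simplex. -/
def WeaklySystolic (X : SComplex V) : Prop :=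
  X.Flag ∧ ∀ v : V, v ∈ X.vertexSet → ∀ i : ℕ, 1 ≤ i → ∀ σ ∈ X.faces,
    (∀ u ∈ σ, X.Reach (i + 1) v u ∧ ¬ X.Reach i v u) →
    ∃ τ ∈ (X.link σ).faces,
      (τ : Set V) = {u | u ∈ (X.link σ).vertexSet ∧ X.Reach i v u}

/-- A complex with `SD₂*(k)` links. -/
def SD2starLinks (X : SComplex V) (k : ℕ) : Prop :=
  X.SD2star k ∧ ∀ σ ∈ X.faces, (X.link σ).SD2star k

/-- Elementary homotopies of edge paths. -/
inductive HomEq (X : SComplex V) : List V → List V → Prop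
  | refl (p : List V) : HomEq X p p
  | symm {p q} : HomEq X p q → HomEq X q p
  | trans {p q r} : HomEq X p q → HomEq X q r → HomEq X p r
  | backtrack (l₁ l₂ : List V) (a b : V) :
      HomEq X (l₁ ++ [a, b, a] ++ l₂) (l₁ ++ [a] ++ l₂)
  | triangle (l₁ l₂ : List V) (a b c : V) :
      ({a, b, c} : Finset V) ∈ X.faces →
      HomEq X (l₁ ++ [a, b, c] ++ l₂) (l₁ ++ [a, c] ++ l₂)

/-- An edge path in the 1-skeleton. -/
def IsPath (X : SComplex V) (p : List V) : Prop :=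
  p ≠ [] ∧ p.Chain' X.Adj ∧ ∀ v ∈ p, v ∈ X.vertexSet

/-- Combinatorial simple connectedness. -/
def SimplyConnected (X : SComplex V) : Prop :=
  (∀ v ∈ X.vertexSet, ∀ w ∈ X.vertexSet, ∃ p : List V,
      X.IsPath p ∧ p.head? = some v ∧ p.getLast? = some w) ∧
  (∀ p : List V, X.IsPath p → p.head? = p.getLast? → ∃ v : V, X.HomEq p [v])

/-- A `k`-systolic complex: flag, simply connected and locally `k`-large. -/
def Systolic (X : SComplex V) (k : ℕ) : Prop :=
  X.Flag ∧ X.SimplyConnected ∧ X.LocallyLarge k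

/-! #### Geometric realization -/

/-- The geometric realization of a simplicial complex, as a subspace of `V → ℝ`. -/
def realization (X : SComplex V) : Type _ :=
  {f : V → ℝ // (∀ v, 0 ≤ f v) ∧
    ∃ s ∈ X.faces, (∀ v, f v ≠ 0 → v ∈ s) ∧ ∑ v ∈ s, f v = 1}

instance (X : SComplex V) : TopologicalSpace X.realization :=
  inferInstanceAs (TopologicalSpace {f : V → ℝ // (∀ v, 0 ≤ f v) ∧
    ∃ s ∈ X.faces, (∀ v, f v ≠ 0 → v ∈ s) ∧ ∑ v ∈ s, f v = 1})

/-! #### Simplicial cohomology (via ordered cochains) -/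

/-- Ordered `n`-simplices: tuples of vertices spanning a simplex. -/
def Tup (X : SComplex V) (n : ℕ) : Type _ :=
  {f : Fin (n + 1) → V // Finset.image f Finset.univ ∈ X.faces}

/-- Simplicial `n`-cochains with coefficients in `R`. -/
abbrev Cochain (X : SComplex V) (n : ℕ) (R : Type*) : Type _ := X.Tup n → R

/-- The `i`-th face of an ordered simplex. -/
def Tup.face {X : SComplex V} {n : ℕ} (t : X.Tup (n + 1)) (i : Fin (n + 2)) :
    X.Tup n :=
  ⟨fun j => t.1 (i.succAbove j), by
    refine X.down_closed t.2 ?_ ?_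
    · intro x hx
      simp only [Finset.mem_image] at hx ⊢
      obtain ⟨j, -, rfl⟩ := hx
      exact ⟨i.succAbove j, Finset.mem_univ _, rfl⟩
    · exact ⟨t.1 (i.succAbove 0), Finset.mem_image_of_mem _ (Finset.mem_univ _)⟩⟩

/-- The simplicial coboundary operator. -/
def coboundary (X : SComplex V) (n : ℕ) {R : Type*} [CommRing R]
    (h : X.Cochain n R) : X.Cochain (n + 1) R :=
  fun t => ∑ i : Fin (n + 2), (-1 : R) ^ (i : ℕ) * h (t.face i)

/-- Being a coboundary (in degree `0` only the zero cochain is a coboundary). -/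
def IsCoboundary (X : SComplex V) {R : Type*} [CommRing R] :
    ∀ {n : ℕ}, X.Cochain n R → Prop
  | 0, f => f = 0
  | (_ + 1), f => ∃ g, X.coboundary _ g = f

/-- `Hⁿ(X; R) ≠ 0`: there is an `n`-cocycle which is not a coboundary. -/
def CohomNontrivial (X : SComplex V) (n : ℕ) (R : Type*) [CommRing R] : Prop :=
  ∃ f : X.Cochain n R, X.coboundary n f = 0 ∧ ¬ X.IsCoboundary f

end SComplex

/-! ### Spheres, balls, asphericity -/

/-- The `n`-sphere: the unit sphere in `ℝ^{n+1}`. -/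
abbrev nSphere (n : ℕ) : Set (EuclideanSpace ℝ (Fin (n + 1))) :=
  Metric.sphere (0 : EuclideanSpace ℝ (Fin (n + 1))) 1

/-- The closed unit ball in `ℝ^{n+1}`. -/
abbrev nBall (n : ℕ) : Set (EuclideanSpace ℝ (Fin (n + 1))) :=
  Metric.closedBall (0 : EuclideanSpace ℝ (Fin (n + 1))) 1

/-- The inclusion of the sphere into the ball. -/
def sphereIncl (n : ℕ) (x : nSphere n) : nBall n :=
  ⟨x.1, Metric.sphere_subset_closedBall x.2⟩

/-- A map of the `n`-sphere into `T` is null-homotopic iff it extends to the ball. -/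
def NullHomotopicIn {n : ℕ} {T : Type*} [TopologicalSpace T]
    (f : C(nSphere n, T)) : Prop :=
  ∃ g : C(nBall n, T), ∀ x : nSphere n, g (sphereIncl n x) = f x

/-- A space is aspherical if all maps of spheres of dimension `≥ 2` into it are
null-homotopic. -/
def Aspherical (T : Type*) [TopologicalSpace T] : Prop :=
  ∀ n : ℕ, 2 ≤ n → ∀ f : C(nSphere n, T), NullHomotopicIn f

/-- A space is strongly hereditarily aspherical (SHA) if every open cover admits a
refining cover such that the union of every nonempty subfamily is aspherical. -/
def SHA (Z : Type*) [TopologicalSpace Z] : Prop :=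
  ∀ U : Set (Set Z), (∀ u ∈ U, IsOpen u) → ⋃₀ U = Set.univ →
    ∃ C : Set (Set Z), ⋃₀ C = Set.univ ∧ (∀ c ∈ C, ∃ u ∈ U, c ⊆ u) ∧
      ∀ D ⊆ C, D.Nonempty → Aspherical ↥(⋃₀ D)

/-- Maps of `n`-spheres vanish at infinity: for each compact `K` there is a larger
compact `L` such that every map of an `n`-sphere into the complement of `L` is
null-homotopic in the complement of `K`. (For `n = 1` this is simple connectedness
at infinity.) -/
def SpheresVanishAtInfinity (T : Type*) [TopologicalSpace T] (n : ℕ) : Prop :=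
  ∀ K : Set T, IsCompact K → ∃ L : Set T, ∃ _ : IsCompact L, ∃ hKL : K ⊆ L,
    ∀ f : C(nSphere n, ↥(Lᶜ)), ∃ g : C(nBall n, ↥(Kᶜ)),
      ∀ x : nSphere n,
        g (sphereIncl n x) = Set.inclusion (Set.compl_subset_compl.2 hKL) (f x)

/-! ### Cubical complexes -/

/-- A cubical complex, presented by the vertex sets of its closed cubes. -/
structure CComplex (V : Type*) where
  cubes : Set (Finset V)
  nonempty_of_mem : ∀ {c : Finset V}, c ∈ cubes → c.Nonempty

namespace CComplex

/-- A labeling of a finite vertex set as a combinatorial `n`-cube whose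
codimension-one faces are again cubes. -/
def IsCubeLabeling (Y : CComplex V) (c : Finset V) (n : ℕ)
    (φ : (Fin n → Bool) → V) : Prop :=
  Function.Injective φ ∧ c = Finset.image φ Finset.univ ∧
    ∀ (i : Fin n) (b : Bool),
      Finset.image φ (Finset.univ.filter fun x => x i = b) ∈ Y.cubes

/-- `Y` is a genuine cubical complex: every cube carries a hypercube structure and
any two intersecting cubes intersect along a single common subcube. -/
def IsCubical (Y : CComplex V) : Prop :=
  (∀ c ∈ Y.cubes, ∃ (n : ℕ) (φ : (Fin n → Bool) → V), Y.IsCubeLabeling c n φ) ∧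
  (∀ c ∈ Y.cubes, ∀ c' ∈ Y.cubes, (c ∩ c').Nonempty → c ∩ c' ∈ Y.cubes)

def vertexSet (Y : CComplex V) : Set V := {v | ({v} : Finset V) ∈ Y.cubes}

def Adj (Y : CComplex V) (v w : V) : Prop := v ≠ w ∧ ({v, w} : Finset V) ∈ Y.cubes

/-- `Y` is finite dimensional: the cardinalities of cubes are bounded. -/
def FiniteDimensional (Y : CComplex V) : Prop := ∃ N : ℕ, ∀ c ∈ Y.cubes, c.card ≤ N

/-- The link of a vertex `v` of a cubical complex. -/
def link (Y : CComplex V) (v : V) : SComplex V where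
  faces := {s | s.Nonempty ∧ (∀ w ∈ s, Y.Adj v w) ∧ ∃ c ∈ Y.cubes, v ∈ c ∧ s ⊆ c}
  nonempty_of_mem h := h.1
  down_closed {s t} h hsub hne := by
    obtain ⟨-, hadj, c, hc, hvc, hsc⟩ := h
    exact ⟨hne, fun w hw => hadj w (hsub hw), c, hc, hvc, subset_trans hsub hsc⟩

/-- A cubical complex is locally `k`-large if all its vertex links are `k`-large. -/
def LocallyLarge (Y : CComplex V) (k : ℕ) : Prop :=
  ∀ v ∈ Y.vertexSet, (Y.link v).Large k

/-- The thickening of a cubical complex: vertices span a simplex iff they are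
contained in a common cube. -/
def thickening (Y : CComplex V) : SComplex V where
  faces := {s | s.Nonempty ∧ ∃ c ∈ Y.cubes, s ⊆ c}
  nonempty_of_mem h := h.1
  down_closed {s t} h hsub hne := by
    obtain ⟨-, c, hc, hsc⟩ := h
    exact ⟨hne, c, hc, subset_trans hsub hsc⟩

/-- The four vertices of a square (2-cube) of `Y`, in cyclic order. -/
def IsSquare (Y : CComplex V) (a b c d : V) : Prop :=
  ({a, b, c, d} : Finset V) ∈ Y.cubes ∧ Y.Adj a b ∧ Y.Adj b c ∧ Y.Adj c d ∧
    Y.Adj d a ∧ ¬ Y.Adj a c ∧ ¬ Y.Adj b d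

/-- Elementary homotopies of edge paths in a cubical complex. -/
inductive HomEq (Y : CComplex V) : List V → List V → Prop
  | refl (p : List V) : HomEq Y p p
  | symm {p q} : HomEq Y p q → HomEq Y q p
  | trans {p q r} : HomEq Y p q → HomEq Y q r → HomEq Y p r
  | backtrack (l₁ l₂ : List V) (a b : V) :
      HomEq Y (l₁ ++ [a, b, a] ++ l₂) (l₁ ++ [a] ++ l₂)
  | square (l₁ l₂ : List V) (a b c d : V) :
      Y.IsSquare a b c d → HomEq Y (l₁ ++ [a, b, c] ++ l₂) (l₁ ++ [a, d, c] ++ l₂)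

/-- An edge path in the 1-skeleton of a cubical complex. -/
def IsPath (Y : CComplex V) (p : List V) : Prop :=
  p ≠ [] ∧ p.Chain' Y.Adj ∧ ∀ v ∈ p, v ∈ Y.vertexSet

/-- Combinatorial simple connectedness of a cubical complex. -/
def SimplyConnected (Y : CComplex V) : Prop :=
  (∀ v ∈ Y.vertexSet, ∀ w ∈ Y.vertexSet, ∃ p : List V,
      Y.IsPath p ∧ p.head? = some v ∧ p.getLast? = some w) ∧
  (∀ p : List V, Y.IsPath p → p.head? = p.getLast? → ∃ v : V, Y.HomEq p [v])

/-- The geometric realization of a cubical complex, as a subspace of `V → ℝ`: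
each point of a cube `[0,1]ⁿ` is recorded by its multilinear (product) weights on
the `2ⁿ` vertices of the cube. -/
def realization (Y : CComplex V) : Type _ :=
  {f : V → ℝ // ∃ c ∈ Y.cubes, ∃ (n : ℕ) (φ : (Fin n → Bool) → V),
    Y.IsCubeLabeling c n φ ∧ (∀ v, f v ≠ 0 → v ∈ c) ∧
    ∃ x : Fin n → ℝ, (∀ i, x i ∈ Set.Icc (0 : ℝ) 1) ∧
      ∀ ε : Fin n → Bool, f (φ ε) = ∏ i, (if ε i then x i else 1 - x i)}

instance (Y : CComplex V) : TopologicalSpace Y.realization :=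
  inferInstanceAs (TopologicalSpace
    {f : V → ℝ // ∃ c ∈ Y.cubes, ∃ (n : ℕ) (φ : (Fin n → Bool) → V),
    Y.IsCubeLabeling c n φ ∧ (∀ v, f v ≠ 0 → v ∈ c) ∧
    ∃ x : Fin n → ℝ, (∀ i, x i ∈ Set.Icc (0 : ℝ) 1) ∧
      ∀ ε : Fin n → Bool, f (φ ε) = ∏ i, (if ε i then x i else 1 - x i)})

end CComplex

/-! ### Groups: word metrics, hyperbolicity, dimension, actions -/

/-- A monoid is torsion-free if no element other than `1` has finite order
(the definition `Monoid.IsTorsionFree` of the older Mathlib, removed since). -/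
def Monoid.IsTorsionFree (G : Type*) [Monoid G] : Prop :=
  ∀ g : G, g ≠ 1 → ¬IsOfFinOrder g

section Groups

variable {G : Type*} [Group G]

/-- Word length of `g` with respect to a (symmetrized) generating set `S`. -/
def wordLength (S : Set G) (g : G) : ℕ :=
  sInf {n | ∃ l : List G, l.length = n ∧ (∀ x ∈ l, x ∈ S ∨ x⁻¹ ∈ S) ∧ l.prod = g}

/-- The Gromov product with respect to the word metric of `S`. -/
def gromovProd (S : Set G) (x y w : G) : ℝ :=
  ((wordLength S (w⁻¹ * x) : ℝ) + (wordLength S (w⁻¹ * y) : ℝ)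
    - (wordLength S (x⁻¹ * y) : ℝ)) / 2

/-- A group is Gromov hyperbolic if for some finite generating set the Gromov
product satisfies the `δ`-hyperbolicity inequality. -/
def GromovHyperbolic (G : Type*) [Group G] : Prop :=
  ∃ S : Finset G, Subgroup.closure (S : Set G) = ⊤ ∧
    ∃ δ : ℝ, 0 ≤ δ ∧ ∀ x y z w : G,
      min (gromovProd (S : Set G) x z w) (gromovProd (S : Set G) z y w) - δ ≤
        gromovProd (S : Set G) x y w

/-- The cohomological dimension of `G` is at least `n`. -/
def cdGE (G : Type) [Group G] (n : ℕ) : Prop :=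
  ∃ m : ℕ, n ≤ m ∧ ∃ M : Rep ℤ G, ¬ Subsingleton (groupCohomology M m)

/-- The virtual cohomological dimension of `G` is at least `n`: some torsion-free
finite-index subgroup has cohomological dimension at least `n`. -/
def vcdGE (G : Type) [Group G] (n : ℕ) : Prop :=
  ∃ H : Subgroup G, H.FiniteIndex ∧ Monoid.IsTorsionFree H ∧ cdGE H n

/-- A geometric action of `G` on a simplicial complex by simplicial automorphisms:
faces are preserved, there are finitely many orbits of faces, and stabilizers of
faces are finite. -/
def ActsGeometrically (G : Type*) [Group G] {V : Type*} (X : SComplex V) : Prop :=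
  ∃ φ : G →* Equiv.Perm V,
    (∀ (g : G) (s : Finset V), s ∈ X.faces ↔ s.image (φ g) ∈ X.faces) ∧
    (∃ F : Finset (Finset V), ∀ s ∈ X.faces, ∃ g : G, s.image (φ g) ∈ F) ∧
    (∀ s ∈ X.faces, {g : G | s.image (φ g) = s}.Finite)

/-- A `k`-systolic group. -/
def IsSystolicGroup (G : Type*) [Group G] (k : ℕ) : Prop :=
  ∃ (V : Type) (X : SComplex V), X.Systolic k ∧ ActsGeometrically G X

/-- The Rips complex of a subset `A ⊆ G` at scale `δ` (word metric of `S`). -/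
def rips (S : Set G) (A : Set G) (δ : ℕ) : SComplex G where
  faces := {s | s.Nonempty ∧ (s : Set G) ⊆ A ∧
    ∀ x ∈ s, ∀ y ∈ s, wordLength S (x⁻¹ * y) ≤ δ}
  nonempty_of_mem h := h.1
  down_closed {s t} h hsub hne :=
    ⟨hne, subset_trans (Finset.coe_subset.2 hsub) h.2.1,
      fun x hx y hy => h.2.2 x (hsub hx) y (hsub hy)⟩

/-- The inclusion of Rips complexes induced by increasing the scale. -/
def ripsIncl (S : Set G) (A : Set G) {δ δ' : ℕ} (h : δ ≤ δ') :
    C((rips S A δ).realization, (rips S A δ').realization) where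
  toFun f := ⟨f.1, f.2.1, by
    obtain ⟨s, hs, h1, h2⟩ := f.2.2
    exact ⟨s, ⟨hs.1, hs.2.1, fun x hx y hy => le_trans (hs.2.2 x hx y hy) h⟩, h1, h2⟩⟩
  continuous_toFun := Continuous.subtype_mk continuous_subtype_val _

/-- A group is asymptotically hereditarily aspherical (AHA) if, with respect to
any word metric, for every scale `δ` there is a larger scale `δ'` such that for
every subset `A`, spheres of dimension `≥ 2` in the Rips complex of `A` at scale
`δ` contract after inclusion into the Rips complex at scale `δ'`. -/
def IsAHA (G : Type*) [Group G] : Prop :=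
  ∀ S : Finset G, Subgroup.closure (S : Set G) = ⊤ →
    ∀ δ : ℕ, 1 ≤ δ → ∃ δ' : ℕ, ∃ h : δ ≤ δ', ∀ A : Set G, ∀ n : ℕ, 2 ≤ n →
      ∀ f : C(nSphere n, (rips (S : Set G) A δ).realization),
        NullHomotopicIn ((ripsIncl (S : Set G) A h).comp f)

/-- Geodesic rays from the identity in the word metric. -/
def IsGeodesicRay (S : Set G) (r : ℕ → G) : Prop :=
  r 0 = 1 ∧ ∀ i j : ℕ, wordLength S ((r i)⁻¹ * r j) = max i j - min i j

/-- Two rays are asymptotic. -/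
def RayRel (S : Set G) (r r' : {r : ℕ → G // IsGeodesicRay S r}) : Prop :=
  ∃ C : ℕ, ∀ i, wordLength S ((r.1 i)⁻¹ * r'.1 i) ≤ C

/-- The Gromov boundary: asymptoty classes of geodesic rays. -/
def GromovBoundary (S : Set G) : Type _ := Quot (RayRel S)

/-- The topology of the Gromov boundary, generated by the sets of ray classes
having a representative agreeing with a given ray up to time `n`. -/
instance (S : Set G) : TopologicalSpace (GromovBoundary S) :=
  TopologicalSpace.generateFrom
    {U | ∃ (r : {r : ℕ → G // IsGeodesicRay S r}) (n : ℕ),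
      U = {ξ : GromovBoundary S | ∃ r' : {r : ℕ → G // IsGeodesicRay S r},
        Quot.mk _ r' = ξ ∧ ∀ i ≤ n, r'.1 i = r.1 i}}

end Groups


/-! ### Coxeter systems, nerves, Davis complexes -/

section Coxeter

variable {B : Type*} {W : Type*} [Group W] {M : CoxeterMatrix B}

/-- A Coxeter matrix is right-angled if all off-diagonal entries are `2` or `∞`
(`∞` being encoded by `0`). -/
def IsRightAngled (M : CoxeterMatrix B) : Prop :=
  ∀ i j : B, i ≠ j → M i j = 2 ∨ M i j = 0

/-- A subset `T` of the generators is spherical if the special subgroup `W_T`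
is finite. -/
def Spherical (cs : CoxeterSystem M W) (T : Finset B) : Prop :=
  (Subgroup.closure (cs.simple '' (T : Set B)) : Set W).Finite

/-- The nerve of a Coxeter system: simplices are the nonempty spherical subsets
of the set of generators. -/
def nerve (cs : CoxeterSystem M W) : SComplex B where
  faces := {T | T.Nonempty ∧ Spherical cs T}
  nonempty_of_mem h := h.1
  down_closed {_ _} h hsub hne :=
    ⟨hne, h.2.subset (SetLike.coe_subset_coe.2 (Subgroup.closure_mono
      (Set.image_mono (Finset.coe_subset.2 hsub))))⟩

/-- The right-angled Coxeter matrix associated to a simplicial complex: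
generators are the vertices, adjacent vertices commute, non-adjacent distinct
vertices generate an infinite dihedral group. -/
def coxMatrixOf (X : SComplex V) : CoxeterMatrix V where
  M := Matrix.of fun s t => if s = t then 1 else if X.Adj s t then 2 else 0
  isSymm := by
    ext i j
    by_cases h : i = j
    · subst h; rfl
    · by_cases ha : X.Adj i j
      · simp [Matrix.transpose_apply, h, Ne.symm h, ha, ha.symm]
      · have ha' : ¬ X.Adj j i := fun hc => ha hc.symm
        simp [Matrix.transpose_apply, h, Ne.symm h, ha, ha']
  diagonal i := by simp
  off_diagonal i j h := by
    by_cases ha : X.Adj i j <;> simp [h, ha]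

lemma isRightAngled_coxMatrixOf (X : SComplex V) :
    IsRightAngled (coxMatrixOf X) := by
  intro i j h
  by_cases ha : X.Adj i j
  · left; simp [coxMatrixOf, h, ha]
  · right; simp [coxMatrixOf, h, ha]

/-- The right-angled Coxeter group with nerve `X`. -/
def CoxGroup (X : SComplex V) : Type _ := (coxMatrixOf X).Group

instance (X : SComplex V) : Group (CoxGroup X) :=
  inferInstanceAs (Group (coxMatrixOf X).Group)

/-- The canonical Coxeter system on `CoxGroup X`. -/
def coxSys (X : SComplex V) : CoxeterSystem (coxMatrixOf X) (CoxGroup X) :=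
  (coxMatrixOf X).toCoxeterSystem

/-- The left coset `w • W_T` of a special subgroup. -/
def cosetSet (cs : CoxeterSystem M W) (w : W) (T : Finset B) : Set W :=
  (w * ·) '' (Subgroup.closure (cs.simple '' (T : Set B)) : Set W)

/-- The cubes of the Davis complex of a right-angled Coxeter system: the finite
vertex sets that are cosets of spherical special subgroups. -/
def davisCubes (cs : CoxeterSystem M W) : Set (Finset W) :=
  {c | ∃ (w : W) (T : Finset B), Spherical cs T ∧ (c : Set W) = cosetSet cs w T}

/-- The Davis complex as a cubical complex (right-angled case). -/
def davisCC (cs : CoxeterSystem M W) : CComplex W where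
  cubes := davisCubes cs
  nonempty_of_mem {c} h := by
    obtain ⟨w, T, _, hc⟩ := h
    have hw : w ∈ (c : Set W) := by
      rw [hc]; exact ⟨1, Subgroup.one_mem _, mul_one w⟩
    exact ⟨w, hw⟩

/-- The relation identifying `x` with `h * x` for `h ∈ H`. -/
def leftRel (H : Subgroup W) (x y : W) : Prop := ∃ h ∈ H, y = h * x

/-- The quotient `H \ Σ` of the cubical Davis complex by a subgroup `H ≤ W`. -/
def quotCC (cs : CoxeterSystem M W) (H : Subgroup W) :
    CComplex (Quot (leftRel H)) where
  cubes := {c | ∃ d ∈ davisCubes cs, c = d.image (Quot.mk (leftRel H))}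
  nonempty_of_mem {c} h := by
    obtain ⟨d, hd, rfl⟩ := h
    exact ((davisCC cs).nonempty_of_mem hd).image _

/-- The minimal displacement of the action of `H` on the thickening of the Davis
complex is at least `d`. -/
def MinDisplacementGE (cs : CoxeterSystem M W) (H : Subgroup W) (d : ℕ) : Prop :=
  ∀ h ∈ H, h ≠ 1 → ∀ v : W, ¬ ((davisCC cs).thickening).Reach (d - 1) v (h * v)

/-! #### The standard triangulation of the Davis complex, chambers, orientations -/

/-- A spherical coset, i.e. a vertex of the standard triangulation of the Davis
complex. -/
def IsSphericalCoset (cs : CoxeterSystem M W) (A : Set W) : Prop :=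
  ∃ (w : W) (T : Finset B), Spherical cs T ∧ A = cosetSet cs w T

/-- Vertices of the standard triangulation of the Davis complex: cosets of
spherical special subgroups. -/
def DVertex (cs : CoxeterSystem M W) : Type _ := {A : Set W // IsSphericalCoset cs A}

/-- The standard triangulation of the Davis complex: simplices are the finite
chains of spherical cosets ordered by inclusion. -/
def davisSimp (cs : CoxeterSystem M W) : SComplex (DVertex cs) where
  faces := {s | s.Nonempty ∧ ∀ x ∈ s, ∀ y ∈ s, x.1 ⊆ y.1 ∨ y.1 ⊆ x.1}
  nonempty_of_mem h := h.1
  down_closed {_ _} h hsub hne := ⟨hne, fun x hx y hy => h.2 x (hsub hx) y (hsub hy)⟩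

/-- The (vertex set of the) chamber `w • K` of the Davis complex: all spherical
cosets containing `w`. -/
def chamber (cs : CoxeterSystem M W) (w : W) : Set (DVertex cs) := {A | w ∈ A.1}

/-- The action of `H` on spherical cosets. -/
def dleftRel (cs : CoxeterSystem M W) (H : Subgroup W) (A A' : DVertex cs) : Prop :=
  ∃ h ∈ H, A'.1 = (h * ·) '' A.1

/-- Vertices of the quotient `H \ Σ` (standard triangulation). -/
def QVertex (cs : CoxeterSystem M W) (H : Subgroup W) : Type _ :=
  Quot (dleftRel cs H)

/-- The quotient map on vertices. -/
def qmk (cs : CoxeterSystem M W) (H : Subgroup W) : DVertex cs → QVertex cs H :=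
  Quot.mk (dleftRel cs H)

/-- The quotient `H \ Σ` of the standard triangulation of the Davis complex. -/
def quotSimp (cs : CoxeterSystem M W) (H : Subgroup W) :
    SComplex (QVertex cs H) where
  faces := {s | ∃ t ∈ (davisSimp cs).faces, s = t.image (qmk cs H)}
  nonempty_of_mem {s} h := by
    obtain ⟨t, ht, rfl⟩ := h
    exact ((davisSimp cs).nonempty_of_mem ht).image _
  down_closed {s t} h hsub hne := by
    obtain ⟨t₀, ht₀, rfl⟩ := h
    refine ⟨t₀.filter (fun x => qmk cs H x ∈ t), ⟨?_, ?_⟩, ?_⟩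
    · obtain ⟨q, hq⟩ := hne
      obtain ⟨x, hx, hxq⟩ := Finset.mem_image.1 (hsub hq)
      exact ⟨x, Finset.mem_filter.2 ⟨hx, by rw [hxq]; exact hq⟩⟩
    · intro x hx y hy
      exact ht₀.2 x (Finset.filter_subset _ _ hx) y (Finset.filter_subset _ _ hy)
    · ext q
      constructor
      · intro hq
        obtain ⟨x, hx, hxq⟩ := Finset.mem_image.1 (hsub hq)
        exact Finset.mem_image.2 ⟨x, Finset.mem_filter.2 ⟨hx, by rw [hxq]; exact hq⟩, hxq⟩
      · intro hq
        obtain ⟨x, hx, hxq⟩ := Finset.mem_image.1 hq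
        rw [← hxq]
        exact (Finset.mem_filter.1 hx).2

/-- The copy of the chamber `w • K` in the quotient `H \ Σ`. -/
def pchamber (cs : CoxeterSystem M W) (H : Subgroup W) (w : W) :
    Set (QVertex cs H) := qmk cs H '' chamber cs w

/-- The set `𝒦` of copies of the Davis chamber `K` in the quotient `H \ Σ`. -/
def copies (cs : CoxeterSystem M W) (H : Subgroup W) : Set (Set (QVertex cs H)) :=
  Set.range (pchamber cs H)

/-- An orientation of the quotient `H \ Σ`: a choice of sign for each copy of the
chamber, alternating under the generators. -/
def IsOrientation (cs : CoxeterSystem M W) (H : Subgroup W)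
    (ε : Set (QVertex cs H) → ℤ) : Prop :=
  (∀ w : W, ε (pchamber cs H w) = 1 ∨ ε (pchamber cs H w) = -1) ∧
  ∀ (w : W) (s : B), ε (pchamber cs H (cs.simple s * w)) = - ε (pchamber cs H w)

/-- The action of `u ∈ W` on spherical cosets. -/
def wAct (cs : CoxeterSystem M W) (u : W) (A : DVertex cs) : DVertex cs :=
  ⟨(u * ·) '' A.1, by
    obtain ⟨w, T, hT, hA⟩ := A.2
    refine ⟨u * w, T, hT, ?_⟩
    rw [hA]
    unfold cosetSet
    rw [← Set.image_comp]
    congr 1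
    funext x
    simp [Function.comp, mul_assoc]⟩

/-- The action of `u ∈ W` on ordered simplices of the standard triangulation. -/
def tupAct (cs : CoxeterSystem M W) (u : W) {n : ℕ}
    (t : (davisSimp cs).Tup n) : (davisSimp cs).Tup n :=
  ⟨fun j => wAct cs u (t.1 j), by
    have h2 := t.2
    refine ⟨?_, ?_⟩
    · exact ⟨wAct cs u (t.1 0), Finset.mem_image_of_mem _ (Finset.mem_univ _)⟩
    · intro x hx y hy
      obtain ⟨j, -, rfl⟩ := Finset.mem_image.1 hx
      obtain ⟨j', -, rfl⟩ := Finset.mem_image.1 hy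
      have := h2.2 (t.1 j) (Finset.mem_image_of_mem _ (Finset.mem_univ _))
        (t.1 j') (Finset.mem_image_of_mem _ (Finset.mem_univ _))
      rcases this with h | h
      · exact Or.inl (Set.image_mono h)
      · exact Or.inr (Set.image_mono h)⟩

/-- The image in the quotient `H \ Σ` of an ordered simplex of `Σ`. -/
def ptup (cs : CoxeterSystem M W) (H : Subgroup W) {n : ℕ}
    (t : (davisSimp cs).Tup n) : (quotSimp cs H).Tup n :=
  ⟨fun j => qmk cs H (t.1 j), by
    refine ⟨Finset.image t.1 Finset.univ, t.2, ?_⟩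
    rw [Finset.image_image]
    rfl⟩

/-- An ordered simplex of `Σ` lies in the fundamental chamber `K` iff each of its
vertices is a coset containing `1`. -/
def InChamberK (cs : CoxeterSystem M W) {n : ℕ} (t : (davisSimp cs).Tup n) : Prop :=
  ∀ j, (1 : W) ∈ (t.1 j).1

/-- The Davis chamber `K`, as the full subcomplex of the standard triangulation
spanned by the cosets containing `1`. -/
def chamberK (cs : CoxeterSystem M W) : SComplex (DVertex cs) :=
  (davisSimp cs).fullSub {A : DVertex cs | (1 : W) ∈ A.1}

/-- The subcomplex `K^S = ⋃_{s ∈ S} K_s` of the Davis chamber: faces of simplices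
of `K` whose minimum vertex is `{1, s}` for a generator `s`. -/
def inKS (cs : CoxeterSystem M W) (t : Finset (DVertex cs)) : Prop :=
  ∃ t' ∈ (chamberK cs).faces, t ⊆ t' ∧
    ∃ s : B, ∃ A ∈ t', A.1 = {(1 : W), cs.simple s} ∧ ∀ A' ∈ t', A.1 ⊆ A'.1

end Coxeter

/-! ### The basic construction -/

/-- A bundled simplicial complex. -/
structure BCpx where
  V : Type
  X : SComplex V

/-- One step of the basic construction with displacement parameter `d`: pass from
a complex `X` to the thickening of the quotient of the Davis complex of the
right-angled Coxeter group with nerve `X` by a torsion-free finite-index subgroup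
whose minimal displacement on the thickened Davis complex is at least `d` and
whose quotient admits an orientation. -/
def stepRel (d : ℕ) (A A' : BCpx) : Prop :=
  ∃ H : Subgroup (CoxGroup A.X), H.FiniteIndex ∧ Monoid.IsTorsionFree H ∧
    MinDisplacementGE (coxSys A.X) H d ∧
    (∃ ε, IsOrientation (coxSys A.X) H ε) ∧
    A' = ⟨Quot (leftRel H), (quotCC (coxSys A.X) H).thickening⟩

/-- `k` iterations of the basic construction (with displacement parameter `d`). -/
def iterSteps (d : ℕ) : ℕ → BCpx → BCpx → Prop
  | 0, A, A' => A' = A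
  | (k + 1), A, A' => ∃ Amid : BCpx, stepRel d A Amid ∧ iterSteps d k Amid A'

/-- The result of the basic construction: some number of iterations. -/
def BasicConstruction (A A' : BCpx) : Prop := ∃ k : ℕ, iterSteps 5 k A A'

end Osajda
namespace Osajda

/-- The simplicial complex induced on the vertex set of a subcomplex (so that the
vertices of `Z` become the generators of the associated right-angled Coxeter
group). -/
def onVertices {V : Type*} (Z : SComplex V) : SComplex ↥Z.vertexSet where
  faces := {s | s.image Subtype.val ∈ Z.faces}
  nonempty_of_mem {s} h := by
    have := Z.nonempty_of_mem h
    rwa [Finset.image_nonempty] at this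
  down_closed {s t} h hsub hne :=
    Z.down_closed h (Finset.image_subset_image hsub) (hne.image _)


/-! A step `X ↦ Th(H \ Σ)` of the basic construction embeds the 1-skeleton of `X` as an
induced subgraph of the 1-skeleton of `Th(H \ Σ)`, via `v ↦ [s_v]`. All the vertices `s_v`
of the Davis complex `Σ` lie within distance one of `1` in `Th(Σ)`, so large displacement
keeps `H` from identifying two of them, or from putting `[s_v]` and `[s_w]` in a common
cube unless `s_v s_w` lies in a finite special subgroup; in a right-angled Coxeter group this
happens only when `v` and `w` are adjacent.
Hence the 1-skeleton of `Z` is an induced subgraph of that of `X`, and an induced subgraph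
`Γ ⊆ Γ'` yields an injection `W_Γ → W_Γ'` of right-angled Coxeter groups, split by the
retraction that kills the generators outside `Γ`. -/

variable {V V' : Type*}

namespace SComplex

def oneSkeleton (X : SComplex V) : SimpleGraph V where
  Adj := X.Adj
  symm := ⟨fun _ _ h => h.symm⟩
  loopless := ⟨fun _ h => h.1 rfl⟩

lemma reach_zero (X : SComplex V) (a : V) : X.Reach 0 a a :=
  ⟨fun _ => a, by simp, by simp, fun i => i.elim0⟩

lemma Reach.snoc {X : SComplex V} {n : ℕ} {a b c : V} (h : X.Reach n a b)
    (hbc : b = c ∨ X.Adj b c) : X.Reach (n + 1) a c := by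
  obtain ⟨p, hp0, hpn, hp⟩ := h
  refine ⟨Fin.snoc p c, ?_, Fin.snoc_last _ _, fun i => ?_⟩
  · rw [← Fin.castSucc_zero, Fin.snoc_castSucc, hp0]
  · induction i using Fin.lastCases with
    | last => rw [Fin.succ_last, Fin.snoc_last, Fin.snoc_castSucc, hpn]; exact hbc
    | cast j => rw [Fin.succ_castSucc, Fin.snoc_castSucc, Fin.snoc_castSucc]; exact hp j

lemma Reach.mono {X : SComplex V} {m n : ℕ} {a b : V} (h : X.Reach m a b) (hmn : m ≤ n) :
    X.Reach n a b := by
  induction n, hmn using Nat.le_induction with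
  | base => exact h
  | succ n _ ih => exact Reach.snoc ih (Or.inl rfl)

end SComplex

lemma finite_closure_pair_of_commute {G : Type*} [Group G] {a b : G} (ha : a * a = 1)
    (hb : b * b = 1) (hab : Commute a b) : (Subgroup.closure {a, b} : Set G).Finite := by
  have ha_inv : a⁻¹ = a := inv_eq_of_mul_eq_one_right ha
  have hb_inv : b⁻¹ = b := inv_eq_of_mul_eq_one_right hb
  have ha' : ∀ x, x * a * a = x := fun x => by rw [mul_assoc, ha, mul_one]
  have hb' : ∀ x, x * b * b = x := fun x => by rw [mul_assoc, hb, mul_one]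
  refine Set.Finite.subset (s := {1, a, b, a * b}) (Set.toFinite _) fun x hx => ?_
  induction hx using Subgroup.closure_induction_left with
  | one => simp
  | mul_left x hx y _ hy | inv_mul_cancel x hx y _ hy =>
    simp only [Set.mem_insert_iff, Set.mem_singleton_iff] at hx hy ⊢
    rcases hx with rfl | rfl <;> rcases hy with rfl | rfl | rfl | rfl <;>
      simp [← mul_assoc, ← hab.eq, *]

section RightAngledCoxeterGroup

variable (X : SComplex V)

lemma coxMatrixOf_apply_of_adj {v w : V} (h : X.Adj v w) : coxMatrixOf X v w = 2 := by
  simp [coxMatrixOf, h.1, h]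

lemma isLiftable_coxMatrixOf {G : Type*} [Monoid G] {g : V → G} (hsq : ∀ v, g v * g v = 1)
    (hcomm : ∀ v w, X.Adj v w → Commute (g v) (g w)) : (coxMatrixOf X).IsLiftable g := by
  intro v w
  by_cases hvw : v = w
  · subst hvw
    simpa [coxMatrixOf] using hsq v
  by_cases hadj : X.Adj v w
  · rw [coxMatrixOf_apply_of_adj X hadj, pow_two, (hcomm w v hadj.symm).mul_mul_mul_comm,
      hsq, hsq, one_mul]
  · simp [coxMatrixOf, hvw, hadj]

variable {X}

lemma commute_simple_of_adj {v w : V} (h : X.Adj v w) :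
    Commute ((coxSys X).simple v) ((coxSys X).simple w) := by
  have hsq := (coxSys X).simple_mul_simple_pow v w
  rw [coxMatrixOf_apply_of_adj X h, pow_two] at hsq
  have := eq_inv_of_mul_eq_one_left hsq
  rwa [mul_inv_rev, (coxSys X).inv_simple, (coxSys X).inv_simple] at this

variable (X) in
lemma simple_injective : Function.Injective (coxSys X).simple := by
  intro v w hvw
  by_contra hne
  let g : V → Multiplicative (ZMod 2) := fun u => if u = v then .ofAdd 1 else 1
  have hg : (coxMatrixOf X).IsLiftable g :=
    isLiftable_coxMatrixOf X (fun u => by unfold g; split_ifs <;> decide)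
      fun _ _ _ => Commute.all _ _
  have := congrArg ((coxSys X).lift ⟨g, hg⟩) hvw
  simp [g, Ne.symm hne] at this

/-- Non-adjacent generators generate an infinite dihedral group: map them to the two
reflections `sr 0`, `sr 1` of `DihedralGroup 0` and every other generator to `1`. -/
lemma adj_of_isOfFinOrder_simple_mul {v w : V} (hvw : v ≠ w)
    (h : IsOfFinOrder ((coxSys X).simple v * (coxSys X).simple w)) : X.Adj v w := by
  open DihedralGroup in
  by_contra hna
  let g : V → DihedralGroup 0 := fun u => if u = v then sr 0 else if u = w then sr 1 else 1
  have hg : (coxMatrixOf X).IsLiftable g := by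
    refine isLiftable_coxMatrixOf X (fun u => by unfold g; split_ifs <;> simp) ?_
    intro a b hab
    unfold g
    split_ifs <;> subst_vars <;> first
      | exact Commute.one_left _ | exact Commute.one_right _ | exact Commute.refl _
      | exact absurd hab hna | exact absurd hab.symm hna
  have himage := ((coxSys X).lift ⟨g, hg⟩).isOfFinOrder h
  simp only [map_mul, CoxeterSystem.lift_apply_simple, g, if_pos, if_neg hvw.symm] at himage
  rw [sr_mul_sr, sub_zero, ← orderOf_pos_iff, orderOf_r_one] at himage
  exact himage.ne rfl

end RightAngledCoxeterGroup

lemma spherical_pair {X : SComplex V} {v w : V} (h : v = w ∨ X.Adj v w) :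
    Spherical (coxSys X) {v, w} := by
  unfold Spherical
  rw [Finset.coe_pair, Set.image_pair]
  refine finite_closure_pair_of_commute ((coxSys X).simple_mul_simple_self v)
    ((coxSys X).simple_mul_simple_self w) ?_
  rcases h with rfl | h
  · exact Commute.refl _
  · exact commute_simple_of_adj h

namespace CoxGroup

variable {X : SComplex V} {X' : SComplex V'}

def map (f : X.oneSkeleton ↪g X'.oneSkeleton) : CoxGroup X →* CoxGroup X' :=
  (coxSys X).lift ⟨fun v => (coxSys X').simple (f v),
    isLiftable_coxMatrixOf X (fun _ => (coxSys X').simple_mul_simple_self _)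
      fun _ _ h => commute_simple_of_adj (f.map_adj_iff.2 h)⟩

lemma isLiftable_extend_simple (f : X.oneSkeleton ↪g X'.oneSkeleton) :
    (coxMatrixOf X').IsLiftable (Function.extend f (coxSys X).simple 1) := by
  refine isLiftable_coxMatrixOf X' (fun b => ?_) fun a b hab => ?_
  · by_cases hb : ∃ v, f v = b
    · obtain ⟨v, rfl⟩ := hb
      rw [f.injective.extend_apply]
      exact (coxSys X).simple_mul_simple_self v
    · rw [Function.extend_apply' _ _ _ hb, Pi.one_apply, one_mul]
  · by_cases ha : ∃ v, f v = a
    · by_cases hb : ∃ w, f w = b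
      · obtain ⟨v, rfl⟩ := ha
        obtain ⟨w, rfl⟩ := hb
        rw [f.injective.extend_apply, f.injective.extend_apply]
        exact commute_simple_of_adj (f.map_adj_iff.1 hab)
      · rw [Function.extend_apply' _ _ _ hb]
        exact Commute.one_right _
    · rw [Function.extend_apply' _ _ _ ha]
      exact Commute.one_left _

/-- Kills the generators outside the image of `f`; this respects the relations because `f`
also reflects adjacency. -/
def retraction (f : X.oneSkeleton ↪g X'.oneSkeleton) : CoxGroup X' →* CoxGroup X :=
  (coxSys X').lift ⟨_, isLiftable_extend_simple f⟩

lemma retraction_comp_map (f : X.oneSkeleton ↪g X'.oneSkeleton) :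
    (retraction f).comp (map f) = MonoidHom.id _ :=
  (coxSys X).ext_simple fun v => by
    simp [map, retraction, f.injective.extend_apply]

lemma map_injective (f : X.oneSkeleton ↪g X'.oneSkeleton) : Function.Injective (map f) :=
  Function.LeftInverse.injective (g := retraction f) (DFunLike.congr_fun (retraction_comp_map f))

end CoxGroup

section DavisComplex

variable {B W : Type*} [Group W] {M : CoxeterMatrix B} {cs : CoxeterSystem M W}
  {T : Finset B} {u x y : W}

lemma mem_cosetSet_self (cs : CoxeterSystem M W) (u : W) (T : Finset B) :
    u ∈ cosetSet cs u T :=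
  ⟨1, Subgroup.one_mem _, mul_one u⟩

lemma simple_mem_cosetSet_one {i : B} (hi : i ∈ T) : cs.simple i ∈ cosetSet cs 1 T :=
  ⟨cs.simple i, Subgroup.subset_closure ⟨i, hi, rfl⟩, one_mul _⟩

lemma mul_mem_cosetSet (g : W) (hx : x ∈ cosetSet cs u T) : g * x ∈ cosetSet cs (g * u) T := by
  obtain ⟨a, ha, rfl⟩ := hx
  exact ⟨a, ha, mul_assoc g u a⟩

lemma inv_mul_mem_closure_of_mem_cosetSet (hx : x ∈ cosetSet cs u T)
    (hy : y ∈ cosetSet cs u T) : x⁻¹ * y ∈ Subgroup.closure (cs.simple '' T) := by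
  obtain ⟨a, ha, rfl⟩ := hx
  obtain ⟨b, hb, rfl⟩ := hy
  simpa [mul_assoc] using mul_mem (inv_mem ha) hb

lemma eq_or_adj_of_mem_cosetSet (hT : Spherical cs T) (hx : x ∈ cosetSet cs u T)
    (hy : y ∈ cosetSet cs u T) : x = y ∨ (davisCC cs).thickening.Adj x y := by
  have hfin : (cosetSet cs u T).Finite := hT.image _
  refine or_iff_not_imp_left.2 fun hne => ⟨hne, Finset.insert_nonempty _ _, hfin.toFinset,
    ⟨u, T, hT, hfin.coe_toFinset⟩, ?_⟩
  simp [Set.insert_subset_iff, hx, hy]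

lemma MinDisplacementGE.eq_one_of_reach {H : Subgroup W} {d : ℕ} {g : W}
    (hH : MinDisplacementGE cs H d) (hg : g ∈ H)
    (hx : (davisCC cs).thickening.Reach (d - 1) x (g * x)) : g = 1 := by
  by_contra hg1
  exact hH g hg hg1 x hx

lemma leftRel_of_mk_eq {H : Subgroup W} (h : Quot.mk (leftRel H) x = Quot.mk (leftRel H) y) :
    leftRel H x y := by
  have hequiv : Equivalence (leftRel H) :=
    ⟨fun x => ⟨1, H.one_mem, (one_mul x).symm⟩,
      fun ⟨g, hg, hy⟩ => ⟨g⁻¹, inv_mem hg, by rw [hy, inv_mul_cancel_left]⟩,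
      fun ⟨g, hg, hy⟩ ⟨g', hg', hz⟩ =>
        ⟨g' * g, mul_mem hg' hg, by rw [hz, hy, mul_assoc]⟩⟩
  exact hequiv.eqvGen_iff.1 (Quot.eqvGen_exact h)

end DavisComplex

section BasicConstructionStep

variable {X : SComplex V} {H : Subgroup (CoxGroup X)} {d : ℕ}

lemma one_eq_or_adj_simple (v : V) :
    1 = (coxSys X).simple v ∨ (davisCC (coxSys X)).thickening.Adj 1 ((coxSys X).simple v) :=
  eq_or_adj_of_mem_cosetSet (spherical_pair (Or.inl rfl)) (mem_cosetSet_self _ 1 {v, v})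
    (simple_mem_cosetSet_one (by simp))

lemma simple_eq_or_adj_one (v : V) :
    (coxSys X).simple v = 1 ∨ (davisCC (coxSys X)).thickening.Adj ((coxSys X).simple v) 1 :=
  (one_eq_or_adj_simple v).imp Eq.symm SComplex.Adj.symm

/-- If `[s_v] = [s_w]` then `s_w = g s_v` with `g ∈ H`, and `s_v, 1, s_w` is a path of
length `2`, so `g = 1`. -/
lemma injective_quot_mk_simple (hd : 4 ≤ d) (hH : MinDisplacementGE (coxSys X) H d) :
    Function.Injective fun v => Quot.mk (leftRel H) ((coxSys X).simple v) := by
  intro v w hvw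
  obtain ⟨g, hg, hw⟩ := leftRel_of_mk_eq hvw
  have hg1 : g = 1 := hH.eq_one_of_reach hg <| by
    rw [← hw]
    exact ((((SComplex.reach_zero _ _).snoc (simple_eq_or_adj_one v)).snoc
      (one_eq_or_adj_simple w)).mono (by omega))
  exact simple_injective X (by rw [hw, hg1, one_mul])

lemma adj_quot_mk_simple (hd : 4 ≤ d) (hH : MinDisplacementGE (coxSys X) H d) {v w : V}
    (h : X.Adj v w) : (quotCC (coxSys X) H).thickening.Adj
      (Quot.mk _ ((coxSys X).simple v)) (Quot.mk _ ((coxSys X).simple w)) := by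
  have hT := spherical_pair (Or.inr h)
  have hfin : (cosetSet (coxSys X) 1 {v, w}).Finite := hT.image _
  refine ⟨fun he => h.1 (injective_quot_mk_simple hd hH he), Finset.insert_nonempty _ _,
    hfin.toFinset.image (Quot.mk _), ⟨_, ⟨1, _, hT, hfin.coe_toFinset⟩, rfl⟩, ?_⟩
  simp only [Finset.insert_subset_iff, Finset.singleton_subset_iff, Finset.mem_image,
    Set.Finite.mem_toFinset]
  exact ⟨⟨_, simple_mem_cosetSet_one (by simp), rfl⟩,
    ⟨_, simple_mem_cosetSet_one (by simp), rfl⟩⟩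

/-- Write `s_v = h₁ x`, `s_w = h₂ y` with `x, y` in a common cube. The path
`s_w, 1, s_v, h₁ y` of length `3` forces `h₁ = h₂`, and then `s_v s_w = x⁻¹ y` lies in a
finite special subgroup. -/
lemma adj_of_adj_quot_mk_simple (hd : 4 ≤ d) (hH : MinDisplacementGE (coxSys X) H d)
    {v w : V} (h : (quotCC (coxSys X) H).thickening.Adj
      (Quot.mk _ ((coxSys X).simple v)) (Quot.mk _ ((coxSys X).simple w))) : X.Adj v w := by
  obtain ⟨hne, -, -, ⟨c, ⟨u, T, hT, hc⟩, rfl⟩, hsub⟩ := h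
  obtain ⟨x, hxc, hxv⟩ := Finset.mem_image.1 (hsub (Finset.mem_insert_self _ _))
  obtain ⟨y, hyc, hyw⟩ := Finset.mem_image.1 (hsub (Finset.mem_insert_of_mem
    (Finset.mem_singleton_self _)))
  obtain ⟨h₁, hh₁, hv⟩ := leftRel_of_mk_eq hxv
  obtain ⟨h₂, hh₂, hw⟩ := leftRel_of_mk_eq hyw
  rw [← Finset.mem_coe, hc] at hxc hyc
  have h₁₂ : h₁ * h₂⁻¹ = 1 := hH.eq_one_of_reach (x := (coxSys X).simple w)
      (mul_mem hh₁ (inv_mem hh₂)) <| by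
    have hstep := eq_or_adj_of_mem_cosetSet hT (mul_mem_cosetSet h₁ hxc)
      (mul_mem_cosetSet h₁ hyc)
    rw [← hv] at hstep
    rw [hw, mul_assoc, inv_mul_cancel_left, ← hw]
    exact ((((SComplex.reach_zero _ _).snoc (simple_eq_or_adj_one w)).snoc
      (one_eq_or_adj_simple v)).snoc hstep).mono (by omega)
  rw [mul_inv_eq_one] at h₁₂
  subst h₁₂
  refine adj_of_isOfFinOrder_simple_mul (fun hvw => hne (by rw [hvw])) ?_
  have : Finite (Subgroup.closure ((coxSys X).simple '' T)) := hT.to_subtype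
  have hxy := inv_mul_mem_closure_of_mem_cosetSet hxc hyc
  have hvw : (coxSys X).simple v * (coxSys X).simple w = x⁻¹ * y := by
    rw [← (coxSys X).inv_simple v, hv, hw, mul_inv_rev, mul_assoc, inv_mul_cancel_left]
  rw [hvw]
  exact (Subgroup.subtype _).isOfFinOrder
    (isOfFinOrder_of_finite (⟨_, hxy⟩ : Subgroup.closure _))

end BasicConstructionStep

def quotSimpleEmbedding {X : SComplex V} {H : Subgroup (CoxGroup X)} {d : ℕ} (hd : 4 ≤ d)
    (hH : MinDisplacementGE (coxSys X) H d) :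
    X.oneSkeleton ↪g (quotCC (coxSys X) H).thickening.oneSkeleton where
  toFun v := Quot.mk _ ((coxSys X).simple v)
  inj' := injective_quot_mk_simple hd hH
  map_rel_iff' := ⟨adj_of_adj_quot_mk_simple hd hH, adj_quot_mk_simple hd hH⟩

lemma stepRel.nonempty_embedding {d : ℕ} (hd : 4 ≤ d) {A A' : BCpx} (h : stepRel d A A') :
    Nonempty (A.X.oneSkeleton ↪g A'.X.oneSkeleton) := by
  obtain ⟨H, -, -, hH, -, rfl⟩ := h
  exact ⟨quotSimpleEmbedding hd hH⟩

lemma iterSteps.nonempty_embedding {d : ℕ} (hd : 4 ≤ d) :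
    ∀ {k : ℕ} {A A' : BCpx}, iterSteps d k A A' →
      Nonempty (A.X.oneSkeleton ↪g A'.X.oneSkeleton)
  | 0, _, _, rfl => ⟨SimpleGraph.Embedding.refl⟩
  | _ + 1, _, _, ⟨_, hstep, hrest⟩ =>
    let ⟨f⟩ := hstep.nonempty_embedding hd
    let ⟨g⟩ := iterSteps.nonempty_embedding hd hrest
    ⟨g.comp f⟩

lemma SComplex.IsFullSubcomplexOf.adj_iff {Z X : SComplex V} (hZ : Z.IsFullSubcomplexOf X)
    {v w : V} (hv : v ∈ Z.vertexSet) (hw : w ∈ Z.vertexSet) : Z.Adj v w ↔ X.Adj v w :=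
  and_congr_right fun _ =>
    ⟨fun h => hZ.1 h, fun h => hZ.2 _ h (by simp [Set.insert_subset_iff, hv, hw])⟩

def SComplex.IsFullSubcomplexOf.onVerticesEmbedding {Z X : SComplex V}
    (hZ : Z.IsFullSubcomplexOf X) : (onVertices Z).oneSkeleton ↪g X.oneSkeleton where
  toFun := Subtype.val
  inj' := Subtype.val_injective
  map_rel_iff' {v w} := by
    change X.Adj v w ↔ (onVertices Z).Adj v w
    rw [← hZ.adj_iff v.2 w.2]
    simp [onVertices, SComplex.Adj, Finset.image_insert, Subtype.val_injective.ne_iff]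

theorem statement15_general {V₀ : Type} (X₀ : SComplex V₀)
    (Z : SComplex V₀) (hZ : Z.IsFullSubcomplexOf X₀)
    (A : BCpx) (hA : BasicConstruction ⟨V₀, X₀⟩ A) :
    ∃ φ : CoxGroup (onVertices Z) →* CoxGroup A.X, Function.Injective φ := by
  obtain ⟨k, hk⟩ := hA
  obtain ⟨f⟩ := iterSteps.nonempty_embedding (by norm_num) hk
  exact ⟨CoxGroup.map (f.comp hZ.onVerticesEmbedding), CoxGroup.map_injective _⟩

/-- Proposition 5.1. Let `Z` be a full subcomplex of a finite
`5`-large simplicial complex `X₀`, let `X` be obtained from `X₀` by the basic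
construction, and let `(W,S)` be the right-angled Coxeter system with nerve `X`.
Then the right-angled Coxeter group `W'` with nerve `Z` embeds as a subgroup of
`W`. -/
theorem statement15 {V₀ : Type} (X₀ : SComplex V₀)
    (hvert : ∀ v : V₀, ({v} : Finset V₀) ∈ X₀.faces)
    (hfin : X₀.IsFinite) (hlarge : X₀.Large 5)
    (Z : SComplex V₀) (hZ : Z.IsFullSubcomplexOf X₀)
    (A : BCpx) (hA : BasicConstruction ⟨V₀, X₀⟩ A) :
    ∃ φ : CoxGroup (onVertices Z) →* CoxGroup A.X, Function.Injective φ :=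
  statement15_general X₀ Z hZ A hA

end Osajda
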